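/- arXiv:2403.15996 — 7 statements merged into one kernel-verified Lean document; each statement's English description precedes it below -/
import Mathlib

section
/- Let m, n be real numbers with m > n > 1 and let 𝔠 be a real constant. Define the slow path C(H) = 1 + H + 𝔠 * H^(-n/(m-n)) for H > 0. Then for every H > 0, C is differentiable at H with C'(H) = (n*(1 - C(H)) + m*H) / ((m - n) * H); i.e., the slow path is an integral curve of the first eigenvector field r₁ = ((n(1-C)+mH)/((m-n)H), 1) of the flux Jacobian. -/
/-- The slow path `C(H) = 1 + H + 𝔠 * H^(-n/(m-n))` is an integral curve of the first
eigenvector field: for every `H > 0`, `C'(H) = (n*(1 - C(H)) + m*H) / ((m-n)*H)`. -/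
theorem slowPath_integral_curve (m n 𝔠 : ℝ) (hmn : n < m) (hn : 1 < n) :
    ∀ H : ℝ, 0 < H →
      HasDerivAt (fun h : ℝ => 1 + h + 𝔠 * h ^ (-n / (m - n)))
        ((n * (1 - (1 + H + 𝔠 * H ^ (-n / (m - n)))) + m * H) / ((m - n) * H)) H := by
  intro H hH
  set p : ℝ := -n / (m - n) with hp
  have hmn' : m - n ≠ 0 := sub_ne_zero.mpr (ne_of_gt hmn)
  have hHne : H ≠ 0 := ne_of_gt hH
  have h1 : HasDerivAt (fun h : ℝ => 1 + h + 𝔠 * h ^ p)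
      (1 + 𝔠 * (p * H ^ (p - 1))) H := by
    have := (Real.hasDerivAt_rpow_const (x := H) (p := p) (Or.inl hHne)).const_mul 𝔠
    simpa [Pi.add_def] using ((hasDerivAt_const H (1:ℝ)).add (hasDerivAt_id H)).add this
  convert h1 using 1
  have hpow : H ^ (p - 1) = H ^ p / H := by
    rw [Real.rpow_sub hH, Real.rpow_one]
  rw [hpow, hp]
  have h2 : -n + m ≠ 0 := by intro h; apply hmn'; linarith
  field_simp
  ring
end

section
/- Let m, n be real numbers with m > n > 1 and let 𝔠 < 0 be a real constant. Define C(H) = 1 + H + 𝔠 * H^(-n/(m-n)) for H > 0. Then for every H > 0 one has 1 - C(H) + H = (-𝔠) * H^(-n/(m-n)) > 0 and the flux is constant along the curve: H^n * (1 - C(H) + H)^(m-n) = (-𝔠)^(m-n). In other words, the slow paths are constant-flux contours. -/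
theorem Real.rpow_mul_mul_rpow_neg_div_rpow {H a k : ℝ} (n : ℝ) (hH : 0 < H) (ha : 0 ≤ a)
    (hk : k ≠ 0) : H ^ n * (a * H ^ (-n / k)) ^ k = a ^ k := by
  have hexp : -n / k * k = -n := div_mul_cancel₀ _ hk
  rw [Real.mul_rpow ha (Real.rpow_nonneg hH.le _), ← Real.rpow_mul hH.le, hexp,
    mul_left_comm, ← Real.rpow_add hH, add_neg_cancel, Real.rpow_zero, mul_one]

theorem slowPath_constant_flux_general (m n 𝔠 : ℝ) (hmn : n < m) (h𝔠 : 𝔠 < 0) :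
    ∀ H : ℝ, 0 < H →
      (1 - (1 + H + 𝔠 * H ^ (-n / (m - n))) + H = (-𝔠) * H ^ (-n / (m - n)) ∧
       0 < (-𝔠) * H ^ (-n / (m - n)) ∧
       H ^ n * (1 - (1 + H + 𝔠 * H ^ (-n / (m - n))) + H) ^ (m - n) = (-𝔠) ^ (m - n)) := by
  intro H hH
  have hporosity : 1 - (1 + H + 𝔠 * H ^ (-n / (m - n))) + H = (-𝔠) * H ^ (-n / (m - n)) := by
    ring
  refine ⟨hporosity, mul_pos (neg_pos.mpr h𝔠) (Real.rpow_pos_of_pos hH _), ?_⟩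
  rw [hporosity]
  exact Real.rpow_mul_mul_rpow_neg_div_rpow n hH (neg_nonneg.mpr h𝔠.le) (sub_ne_zero.mpr hmn.ne')

/-- Along the slow path `C(H) = 1 + H + 𝔠 * H^(-n/(m-n))` with `𝔠 < 0`, the porosity is
`1 - C(H) + H = (-𝔠) * H^(-n/(m-n)) > 0` and the flux is constant:
`H^n * (1 - C(H) + H)^(m-n) = (-𝔠)^(m-n)`; slow paths are constant-flux contours. -/
theorem slowPath_constant_flux (m n 𝔠 : ℝ) (hmn : n < m) (hn : 1 < n) (h𝔠 : 𝔠 < 0) :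
    ∀ H : ℝ, 0 < H →
      (1 - (1 + H + 𝔠 * H ^ (-n / (m - n))) + H = (-𝔠) * H ^ (-n / (m - n)) ∧
       0 < (-𝔠) * H ^ (-n / (m - n)) ∧
       H ^ n * (1 - (1 + H + 𝔠 * H ^ (-n / (m - n))) + H) ^ (m - n) = (-𝔠) ^ (m - n)) :=
  slowPath_constant_flux_general m n 𝔠 hmn h𝔠
end

section
/- Let m, n be real numbers with m > n > 1, and let C_l, H_l be reals with φ_l := 1 - C_l + H_l > 0. For ζ > 0 and τ > 0 define g(ζ, τ) = (ζ / (n * τ * φ_l^(m-n)))^(1/(n-1)), H(ζ, τ) = g(ζ, τ), and C(ζ, τ) = C_l - H_l + g(ζ, τ). Then 1 - C(ζ,τ) + H(ζ,τ) = φ_l at every point, and the rarefaction-fan functions satisfy both conservation laws classically: for all ζ > 0, τ > 0, ∂C/∂τ + ∂/∂ζ [H^n * (1 - C + H)^(m-n)] = 0 and ∂H/∂τ + ∂/∂ζ [H^n * (1 - C + H)^(m-n)] = 0. -/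
/-- The rarefaction-fan profile through the left state `(C_l, H_l)`. -/
noncomputable def rarefactionG (m n Cl Hl ζ τ : ℝ) : ℝ :=
  (ζ / (n * τ * (1 - Cl + Hl) ^ (m - n))) ^ (1 / (n - 1))

/-- The rarefaction (drying-front) enthalpy `H(ζ,τ)`. -/
noncomputable def rarefactionH (m n Cl Hl ζ τ : ℝ) : ℝ :=
  rarefactionG m n Cl Hl ζ τ

/-- The rarefaction (drying-front) composition `C(ζ,τ)`. -/
noncomputable def rarefactionC (m n Cl Hl ζ τ : ℝ) : ℝ :=
  Cl - Hl + rarefactionG m n Cl Hl ζ τ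

/-- Derivative in `t` of `t ↦ (a/(K·t))^p` at a positive point. -/
lemma deriv_time (a K p τ : ℝ) (ha : 0 < a) (hK : 0 < K) (hτ : 0 < τ) :
    HasDerivAt (fun t : ℝ => (a / (K * t)) ^ p) (-p * (a / (K * τ)) ^ p / τ) τ := by
  have haK : (0:ℝ) ≤ a / K := le_of_lt (by positivity)
  have h1 : HasDerivAt (fun t : ℝ => (a / K) ^ p * t ^ (-p))
      ((a / K) ^ p * (-p * τ ^ (-p - 1))) τ :=
    (Real.hasDerivAt_rpow_const (Or.inl hτ.ne')).const_mul _
  have hev : (fun t : ℝ => (a / (K * t)) ^ p)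
      =ᶠ[nhds τ] (fun t : ℝ => (a / K) ^ p * t ^ (-p)) := by
    filter_upwards [eventually_gt_nhds hτ] with t ht
    rw [← div_div, Real.div_rpow haK ht.le, Real.rpow_neg ht.le, div_eq_mul_inv]
  have h2 := h1.congr_of_eventuallyEq hev
  refine h2.congr_deriv ?_
  have h3 : (a / (K * τ)) ^ p = (a / K) ^ p * τ ^ (-p) := by
    rw [← div_div, Real.div_rpow haK hτ.le, Real.rpow_neg hτ.le, div_eq_mul_inv]
  have h4 : τ ^ (-p - 1) = τ ^ (-p) * τ⁻¹ := by
    rw [show -p - 1 = -p + (-1) from by ring, Real.rpow_add hτ, Real.rpow_neg_one]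
  rw [h3, h4]; ring

/-- Derivative in `z` of `z ↦ (z·c)^q` at a positive point (with `c > 0`). -/
lemma deriv_space (c q ζ : ℝ) (hc : 0 < c) (hζ : 0 < ζ) :
    HasDerivAt (fun z : ℝ => (z * c) ^ q) (q * (ζ * c) ^ (q - 1) * c) ζ := by
  have h0 : ζ * c ≠ 0 := by positivity
  have h := (Real.hasDerivAt_rpow_const (p := q) (Or.inl h0)).comp ζ
    ((hasDerivAt_id ζ).mul_const c)
  simpa [Function.comp_def, mul_comm, mul_assoc, mul_left_comm] using h

/-- The rarefaction fan lies on the fast path (`1 - C + H = φ_l` everywhere) and solves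
both conservation laws `∂C/∂τ + ∂f/∂ζ = 0` and `∂H/∂τ + ∂f/∂ζ = 0` classically, where
`f = H^n * (1 - C + H)^(m-n)` (real powers). -/
theorem rarefaction_solves_conservation (m n Cl Hl : ℝ) (hmn : n < m) (hn : 1 < n)
    (hφ : 0 < 1 - Cl + Hl) :
    ∀ ζ τ : ℝ, 0 < ζ → 0 < τ →
      (1 - rarefactionC m n Cl Hl ζ τ + rarefactionH m n Cl Hl ζ τ = 1 - Cl + Hl) ∧
      (∃ dτ dζ : ℝ,
        HasDerivAt (fun t : ℝ => rarefactionC m n Cl Hl ζ t) dτ τ ∧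
        HasDerivAt (fun z : ℝ => rarefactionH m n Cl Hl z τ ^ n *
          (1 - rarefactionC m n Cl Hl z τ + rarefactionH m n Cl Hl z τ) ^ (m - n)) dζ ζ ∧
        dτ + dζ = 0) ∧
      (∃ dτ dζ : ℝ,
        HasDerivAt (fun t : ℝ => rarefactionH m n Cl Hl ζ t) dτ τ ∧
        HasDerivAt (fun z : ℝ => rarefactionH m n Cl Hl z τ ^ n *
          (1 - rarefactionC m n Cl Hl z τ + rarefactionH m n Cl Hl z τ) ^ (m - n)) dζ ζ ∧
        dτ + dζ = 0) := by
  intro ζ τ hζ hτ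
  have hn1 : (0:ℝ) < n - 1 := by linarith
  have hn0 : (0:ℝ) < n := by linarith
  have hB : (0:ℝ) < (1 - Cl + Hl) ^ (m - n) := Real.rpow_pos_of_pos hφ _
  set B : ℝ := (1 - Cl + Hl) ^ (m - n) with hBdef
  set p : ℝ := 1 / (n - 1) with hpdef
  have hp : 0 < p := by positivity
  set c : ℝ := (n * B * τ)⁻¹ with hcdef
  have hc : 0 < c := by positivity
  -- the fast path identity
  have hpath : ∀ z t : ℝ, 1 - rarefactionC m n Cl Hl z t + rarefactionH m n Cl Hl z t
      = 1 - Cl + Hl := by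
    intro z t; simp only [rarefactionC, rarefactionH]; ring
  -- time derivative of G at (ζ, ·)
  have hGfun : (fun t : ℝ => rarefactionG m n Cl Hl ζ t)
      = fun t : ℝ => (ζ / ((n * B) * t)) ^ p := by
    funext t
    simp only [rarefactionG, ← hBdef, ← hpdef]
    rw [show n * t * B = n * B * t from by ring]
  have hdτ : HasDerivAt (fun t : ℝ => rarefactionG m n Cl Hl ζ t)
      (-p * (ζ / (n * B * τ)) ^ p / τ) τ := by
    rw [hGfun]; exact deriv_time ζ (n * B) p τ hζ (by positivity) hτ
  -- space derivative of the flux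
  have hq1 : p * n - 1 = p := by
    rw [hpdef]; field_simp; ring
  have hflux : HasDerivAt (fun z : ℝ => rarefactionH m n Cl Hl z τ ^ n *
      (1 - rarefactionC m n Cl Hl z τ + rarefactionH m n Cl Hl z τ) ^ (m - n))
      ((p * n) * (ζ * c) ^ (p * n - 1) * c * B) ζ := by
    have h1 : HasDerivAt (fun z : ℝ => (z * c) ^ (p * n) * B)
        ((p * n) * (ζ * c) ^ (p * n - 1) * c * B) ζ :=
      (deriv_space c (p * n) ζ hc hζ).mul_const B
    apply h1.congr_of_eventuallyEq
    filter_upwards [eventually_gt_nhds hζ] with z hz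
    have hzc : (0:ℝ) ≤ z / (n * B * τ) := le_of_lt (by positivity)
    have hzeq : z * c = z / (n * B * τ) := by rw [hcdef, div_eq_mul_inv]
    rw [hpath z τ]
    simp only [rarefactionH, rarefactionG, ← hBdef, ← hpdef]
    rw [show n * τ * B = n * B * τ from by ring, hzeq, Real.rpow_mul hzc]
  refine ⟨hpath ζ τ, ?_, ?_⟩ <;>
  · refine ⟨-p * (ζ / (n * B * τ)) ^ p / τ, (p * n) * (ζ * c) ^ (p * n - 1) * c * B,
      ?_, hflux, ?_⟩
    · first
      | exact hdτ.const_add (Cl - Hl)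
      | exact hdτ
    · rw [hq1, show ζ * c = ζ / (n * B * τ) from by rw [hcdef, div_eq_mul_inv], hcdef]
      field_simp
      ring
end

section
/- Let m, n be real numbers with m > n > 0. Let (C_l, H_l) and (C_r, H_r) be states with H_l > 0, φ_l := 1 - C_l + H_l > 0 and φ_r := 1 - C_r + H_r > 0. Define the intermediate state by H_i = H_l * (φ_l / φ_r)^((m-n)/n) and C_i = H_i + C_r - H_r. Then: (i) 1 - C_i + H_i = φ_r, so the intermediate state has the same porosity as the right state and lies on the fast path through (C_r, H_r); and (ii) H_i^n * (1 - C_i + H_i)^(m-n) = H_l^n * φ_l^(m-n), so the intermediate state carries the same flux as the left state (it lies on the slow path through (C_l, H_l)). -/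
open Real

theorem Real.mul_rpow_div_rpow {H q k n : ℝ} (hH : 0 ≤ H) (hq : 0 ≤ q) (hn : n ≠ 0) :
    (H * q ^ (k / n)) ^ n = H ^ n * q ^ k := by
  rw [mul_rpow hH (rpow_nonneg hq _), ← rpow_mul hq, div_mul_cancel₀ _ hn]

theorem Real.div_rpow_mul_rpow_cancel {a b : ℝ} (k : ℝ) (ha : 0 ≤ a) (hb : 0 < b) :
    (a / b) ^ k * b ^ k = a ^ k := by
  rw [div_rpow ha hb.le, div_mul_cancel₀ _ (rpow_pos_of_pos hb k).ne']

theorem intermediate_state_porosity_and_flux_general (m n Cl Hl Cr Hr : ℝ)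
    (hn : 0 < n) (hHl : 0 < Hl)
    (hφl : 0 < 1 - Cl + Hl) (hφr : 0 < 1 - Cr + Hr) :
    (1 - (Hl * ((1 - Cl + Hl) / (1 - Cr + Hr)) ^ ((m - n) / n) + Cr - Hr) +
        Hl * ((1 - Cl + Hl) / (1 - Cr + Hr)) ^ ((m - n) / n) = 1 - Cr + Hr) ∧
    ((Hl * ((1 - Cl + Hl) / (1 - Cr + Hr)) ^ ((m - n) / n)) ^ n *
        (1 - (Hl * ((1 - Cl + Hl) / (1 - Cr + Hr)) ^ ((m - n) / n) + Cr - Hr) +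
          Hl * ((1 - Cl + Hl) / (1 - Cr + Hr)) ^ ((m - n) / n)) ^ (m - n) =
      Hl ^ n * (1 - Cl + Hl) ^ (m - n)) := by
  have porosity : 1 - (Hl * ((1 - Cl + Hl) / (1 - Cr + Hr)) ^ ((m - n) / n) + Cr - Hr) +
      Hl * ((1 - Cl + Hl) / (1 - Cr + Hr)) ^ ((m - n) / n) = 1 - Cr + Hr := by ring
  refine ⟨porosity, ?_⟩
  rw [porosity, mul_rpow_div_rpow hHl.le (div_pos hφl hφr).le hn.ne', mul_assoc,
    div_rpow_mul_rpow_cancel _ hφl.le hφr]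

/-- The intermediate state `H_i = H_l * (φ_l/φ_r)^((m-n)/n)`, `C_i = H_i + C_r - H_r`
(i) has the same porosity as the right state (fast path through `(C_r, H_r)`), and
(ii) carries the same flux as the left state (slow path through `(C_l, H_l)`). -/
theorem intermediate_state_porosity_and_flux (m n Cl Hl Cr Hr : ℝ)
    (hmn : n < m) (hn : 0 < n) (hHl : 0 < Hl)
    (hφl : 0 < 1 - Cl + Hl) (hφr : 0 < 1 - Cr + Hr) :
    (1 - (Hl * ((1 - Cl + Hl) / (1 - Cr + Hr)) ^ ((m - n) / n) + Cr - Hr) +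
        Hl * ((1 - Cl + Hl) / (1 - Cr + Hr)) ^ ((m - n) / n) = 1 - Cr + Hr) ∧
    ((Hl * ((1 - Cl + Hl) / (1 - Cr + Hr)) ^ ((m - n) / n)) ^ n *
        (1 - (Hl * ((1 - Cl + Hl) / (1 - Cr + Hr)) ^ ((m - n) / n) + Cr - Hr) +
          Hl * ((1 - Cl + Hl) / (1 - Cr + Hr)) ^ ((m - n) / n)) ^ (m - n) =
      Hl ^ n * (1 - Cl + Hl) ^ (m - n)) :=
  intermediate_state_porosity_and_flux_general m n Cl Hl Cr Hr hn hHl hφl hφr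
end

section
/- Let m, n be real with m > n > 0 and let (C_l, H_l), (C_r, H_r) be region-2 states (0 < H_l < C_l < 1 and 0 < H_r < C_r < 1) with porosities φ_l = 1 - C_l + H_l, φ_r = 1 - C_r + H_r, fluxes f_l = H_l^n * φ_l^(m-n), f_r = H_r^n * φ_r^(m-n), and saturated conductivities K₁ = φ_l^m, K₂ = φ_r^m. Let R be a real number with R*K₂ ≠ K₁, and define the saturated-region flux q_s = (R - 1)/(R/K₁ - 1/K₂), the upper (backfilling) shock speed Λ_U = (f_l - q_s)/(C_l - 1), and the lower (wetting) shock speed Λ_L = (q_s - f_r)/(1 - C_r). Then Λ_U = R * Λ_L if and only if a*R² + b*R + c = 0, where a = ((1-C_l)/(1-C_r)) * (1 - (φ_r/φ_l)^m * (H_r/φ_r)^n), b = -((1-C_l)/(1-C_r)) * (1 - (H_r/φ_r)^n) + (H_l/φ_l)^n - 1, and c = 1 - (φ_l/φ_r)^m * (H_l/φ_l)^n. -/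
/-!
Since `H ^ n * φ ^ (m - n) = φ ^ m * (H / φ) ^ n`, each flux is its saturated conductivity times
`(H / φ) ^ n`, so the statement is an identity between rational functions of `K₁`, `K₂`,
`(H_l / φ_l) ^ n` and `(H_r / φ_r) ^ n`. Clearing `C_l - 1` and `1 - C_r` leaves an equation
linear in `q_s`, and multiplying it by `(R K₂ - K₁) / (K₁ K₂)`, which turns `q_s` into `R - 1`,
gives the quadratic in `R`.
-/

open Real

noncomputable def saturatedFlux (K₁ K₂ R : ℝ) : ℝ := (R - 1) / (R / K₁ - 1 / K₂)

theorem saturatedFlux_mul {K₁ K₂ R : ℝ} (hK₁ : K₁ ≠ 0) (hK₂ : K₂ ≠ 0) (hRK : R * K₂ ≠ K₁) :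
    saturatedFlux K₁ K₂ R * (R * K₂ - K₁) = (R - 1) * (K₁ * K₂) := by
  have : R * K₂ - K₁ ≠ 0 := sub_ne_zero.mpr hRK
  unfold saturatedFlux
  field_simp

theorem shock_speed_ratio_iff {K₁ K₂ sl sr Cl Cr R : ℝ} (hK₁ : K₁ ≠ 0) (hK₂ : K₂ ≠ 0)
    (hCl : Cl ≠ 1) (hCr : Cr ≠ 1) (hRK : R * K₂ ≠ K₁) :
    (K₁ * sl - saturatedFlux K₁ K₂ R) / (Cl - 1) =
        R * ((saturatedFlux K₁ K₂ R - K₂ * sr) / (1 - Cr)) ↔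
      (1 - Cl) / (1 - Cr) * (1 - K₂ / K₁ * sr) * R ^ 2 +
          (-((1 - Cl) / (1 - Cr)) * (1 - sr) + sl - 1) * R + (1 - K₁ / K₂ * sl) = 0 := by
  set q := saturatedFlux K₁ K₂ R
  have hw : (R * K₂ - K₁) / (K₁ * K₂) ≠ 0 :=
    div_ne_zero (sub_ne_zero.mpr hRK) (mul_ne_zero hK₁ hK₂)
  have balance : (K₁ * sl - q) / (Cl - 1) = R * ((q - K₂ * sr) / (1 - Cr)) ↔
      K₁ * sl - q + (1 - Cl) / (1 - Cr) * R * (q - K₂ * sr) = 0 := by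
    rw [div_eq_iff (sub_ne_zero.mpr hCl), ← sub_eq_zero]
    ring_nf
  have quadratic : (1 - Cl) / (1 - Cr) * (1 - K₂ / K₁ * sr) * R ^ 2 +
        (-((1 - Cl) / (1 - Cr)) * (1 - sr) + sl - 1) * R + (1 - K₁ / K₂ * sl) =
      (K₁ * sl - q + (1 - Cl) / (1 - Cr) * R * (q - K₂ * sr)) * ((R * K₂ - K₁) / (K₁ * K₂)) := by
    have hCr' : 1 - Cr ≠ 0 := sub_ne_zero.mpr hCr.symm
    field_simp
    linear_combination ((1 - Cr) - (1 - Cl) * R) * saturatedFlux_mul hK₁ hK₂ hRK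
  rw [balance, quadratic, mul_eq_zero, or_iff_left hw]

theorem rpow_mul_rpow_sub_eq_rpow_mul_div_rpow {H φ : ℝ} (m n : ℝ) (hH : 0 ≤ H) (hφ : 0 < φ) :
    H ^ n * φ ^ (m - n) = φ ^ m * (H / φ) ^ n := by
  rw [rpow_sub hφ, div_rpow hH hφ.le]
  field_simp

theorem saturated_ratio_quadratic_general (m n Cl Hl Cr Hr R : ℝ)
    (hHl : 0 < Hl) (hCl : Cl < 1)
    (hHr : 0 < Hr) (hCr : Cr < 1)
    (hRK : R * (1 - Cr + Hr) ^ m ≠ (1 - Cl + Hl) ^ m) :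
    (Hl ^ n * (1 - Cl + Hl) ^ (m - n) -
        (R - 1) / (R / (1 - Cl + Hl) ^ m - 1 / (1 - Cr + Hr) ^ m)) / (Cl - 1) =
      R * (((R - 1) / (R / (1 - Cl + Hl) ^ m - 1 / (1 - Cr + Hr) ^ m) -
        Hr ^ n * (1 - Cr + Hr) ^ (m - n)) / (1 - Cr)) ↔
    ((1 - Cl) / (1 - Cr)) *
        (1 - ((1 - Cr + Hr) / (1 - Cl + Hl)) ^ m * (Hr / (1 - Cr + Hr)) ^ n) * R ^ 2 +
      (-((1 - Cl) / (1 - Cr)) * (1 - (Hr / (1 - Cr + Hr)) ^ n) +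
        (Hl / (1 - Cl + Hl)) ^ n - 1) * R +
      (1 - ((1 - Cl + Hl) / (1 - Cr + Hr)) ^ m * (Hl / (1 - Cl + Hl)) ^ n) = 0 := by
  have hφl : 0 < 1 - Cl + Hl := by linarith
  have hφr : 0 < 1 - Cr + Hr := by linarith
  rw [rpow_mul_rpow_sub_eq_rpow_mul_div_rpow m n hHl.le hφl,
    rpow_mul_rpow_sub_eq_rpow_mul_div_rpow m n hHr.le hφr,
    div_rpow hφr.le hφl.le, div_rpow hφl.le hφr.le]
  exact shock_speed_ratio_iff (rpow_pos_of_pos hφl m).ne' (rpow_pos_of_pos hφr m).ne'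
    hCl.ne hCr.ne hRK

/-- Case VI (perched water table between two region-2 states): under the ansatz of a
constant shock-position ratio `R`, with saturated-region flux
`q_s = (R-1)/(R/K₁ - 1/K₂)`, backfilling shock speed `Λ_U = (f_l - q_s)/(C_l - 1)` and
wetting shock speed `Λ_L = (q_s - f_r)/(1 - C_r)`, one has `Λ_U = R * Λ_L` iff
`a*R² + b*R + c = 0` with the coefficients of Equation (67). -/
theorem saturated_ratio_quadratic (m n Cl Hl Cr Hr R : ℝ)
    (hmn : n < m) (hn : 0 < n)
    (hHl : 0 < Hl) (hHlCl : Hl < Cl) (hCl : Cl < 1)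
    (hHr : 0 < Hr) (hHrCr : Hr < Cr) (hCr : Cr < 1)
    (hRK : R * (1 - Cr + Hr) ^ m ≠ (1 - Cl + Hl) ^ m) :
    (Hl ^ n * (1 - Cl + Hl) ^ (m - n) -
        (R - 1) / (R / (1 - Cl + Hl) ^ m - 1 / (1 - Cr + Hr) ^ m)) / (Cl - 1) =
      R * (((R - 1) / (R / (1 - Cl + Hl) ^ m - 1 / (1 - Cr + Hr) ^ m) -
        Hr ^ n * (1 - Cr + Hr) ^ (m - n)) / (1 - Cr)) ↔
    ((1 - Cl) / (1 - Cr)) *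
        (1 - ((1 - Cr + Hr) / (1 - Cl + Hl)) ^ m * (Hr / (1 - Cr + Hr)) ^ n) * R ^ 2 +
      (-((1 - Cl) / (1 - Cr)) * (1 - (Hr / (1 - Cr + Hr)) ^ n) +
        (Hl / (1 - Cl + Hl)) ^ n - 1) * R +
      (1 - ((1 - Cl + Hl) / (1 - Cr + Hr)) ^ m * (Hl / (1 - Cl + Hl)) ^ n) = 0 :=
  saturated_ratio_quadratic_general m n Cl Hl Cr Hr R hHl hCl hHr hCr hRK
end

section
/- Let m, n be real with m > n > 0. Let (C_l, H_l) be a region-2 state (0 < H_l < C_l < 1) with φ_l = 1 - C_l + H_l and f_l = H_l^n * φ_l^(m-n), and let (C_r, H_r) be a cold (region-1) right state with H_r ≤ 0, C_r < 1, and φ_r := 1 - C_r + H_r > 0, so the right-state flux vanishes. Set K₁ = φ_l^m and K₂ = φ_r^m, let R be real with R*K₂ ≠ K₁, and define q_s = (R - 1)/(R/K₁ - 1/K₂), Λ_U = (f_l - q_s)/(C_l - 1), and Λ_L = q_s/(1 - C_r). Then Λ_U = R * Λ_L if and only if a*R² + b*R + c = 0, where a = (1-C_l)/(1-C_r), b =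 -(1-C_l)/(1-C_r) + (H_l/φ_l)^n - 1, and c = 1 - (φ_l/φ_r)^m * (H_l/φ_l)^n. -/
/-- Case XI (perched water table over a cold, region-1 right state with zero flux):
with `q_s = (R-1)/(R/K₁ - 1/K₂)`, `Λ_U = (f_l - q_s)/(C_l - 1)` and
`Λ_L = q_s/(1 - C_r)`, one has `Λ_U = R * Λ_L` iff `a*R² + b*R + c = 0` with the
simplified coefficients of Equation (72). -/
theorem saturated_ratio_quadratic_cold (m n Cl Hl Cr Hr R : ℝ)
    (hmn : n < m) (hn : 0 < n)
    (hHl : 0 < Hl) (hHlCl : Hl < Cl) (hCl : Cl < 1)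
    (hHr : Hr ≤ 0) (hCr : Cr < 1) (hφr : 0 < 1 - Cr + Hr)
    (hRK : R * (1 - Cr + Hr) ^ m ≠ (1 - Cl + Hl) ^ m) :
    (Hl ^ n * (1 - Cl + Hl) ^ (m - n) -
        (R - 1) / (R / (1 - Cl + Hl) ^ m - 1 / (1 - Cr + Hr) ^ m)) / (Cl - 1) =
      R * (((R - 1) / (R / (1 - Cl + Hl) ^ m - 1 / (1 - Cr + Hr) ^ m)) / (1 - Cr)) ↔
    ((1 - Cl) / (1 - Cr)) * R ^ 2 +
      (-((1 - Cl) / (1 - Cr)) + (Hl / (1 - Cl + Hl)) ^ n - 1) * R +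
      (1 - ((1 - Cl + Hl) / (1 - Cr + Hr)) ^ m * (Hl / (1 - Cl + Hl)) ^ n) = 0 := by
  have hφl : (0:ℝ) < 1 - Cl + Hl := by linarith
  have hA : (0:ℝ) < (1 - Cl + Hl) ^ m := Real.rpow_pos_of_pos hφl m
  have hB : (0:ℝ) < (1 - Cr + Hr) ^ m := Real.rpow_pos_of_pos hφr m
  have hP : (0:ℝ) < (1 - Cl + Hl) ^ n := Real.rpow_pos_of_pos hφl n
  have hQ : (0:ℝ) < Hl ^ n := Real.rpow_pos_of_pos hHl n
  have h1 : (1 - Cl + Hl) ^ (m - n) = (1 - Cl + Hl) ^ m / (1 - Cl + Hl) ^ n :=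
    Real.rpow_sub hφl m n
  have h2 : (Hl / (1 - Cl + Hl)) ^ n = Hl ^ n / (1 - Cl + Hl) ^ n :=
    Real.div_rpow hHl.le hφl.le n
  have h3 : ((1 - Cl + Hl) / (1 - Cr + Hr)) ^ m = (1 - Cl + Hl) ^ m / (1 - Cr + Hr) ^ m :=
    Real.div_rpow hφl.le hφr.le m
  rw [h1, h2, h3]
  set A := (1 - Cl + Hl) ^ m with hAdef
  set B := (1 - Cr + Hr) ^ m with hBdef
  set P := (1 - Cl + Hl) ^ n with hPdef
  set Q := Hl ^ n with hQdef
  have hAne : A ≠ 0 := hA.ne'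
  have hBne : B ≠ 0 := hB.ne'
  have hPne : P ≠ 0 := hP.ne'
  have hden : R / A - 1 / B ≠ 0 := by
    rw [div_sub_div _ _ hAne hBne]
    exact div_ne_zero (by intro h; apply hRK; linarith) (mul_ne_zero hAne hBne)
  have hCl1 : Cl - 1 ≠ 0 := by intro h; linarith [(by linarith : Cl < 1)]
  have hCr1 : (1:ℝ) - Cr ≠ 0 := by intro h; linarith
  have hRBA : R * B - A ≠ 0 := by intro h; apply hRK; linarith
  rw [div_sub_div _ _ hAne hBne]
  have hABne : A * B ≠ 0 := mul_ne_zero hAne hBne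
  field_simp
  set W : ℝ := (1 - Cl) * R ^ 2 * B * P + ((Cl - 1) * P + Q * (1 - Cr) - (1 - Cr) * P) * R * B +
      (B * P - A * Q) * (1 - Cr) with hW
  constructor <;> intro h
  · have h1' : (R * B - A) * (A * W) = (R * B - A) * (A * 0) := by
      rw [hW]; linear_combination (R * B - A) * A * h
    have h2' : W = 0 := by
      have := mul_left_cancel₀ hRBA h1'
      have := mul_left_cancel₀ hAne this
      simpa using this
    linear_combination h2' - hW
  · have h1' : ((1 - Cr) * P) * W = ((1 - Cr) * P) * 0 := by
      rw [hW]; linear_combination ((1 - Cr) * P) * h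
    have h2' : W = 0 := mul_left_cancel₀ (mul_ne_zero hCr1 hPne) h1'
    linear_combination h2' - hW
end

section
/- Let K₁, K₂ > 0, let C_l, C_r < 1, let f_l, f_r be reals, and let R be a real with R*K₂ ≠ K₁. Define the constant q_s = (R - 1)/(R/K₁ - 1/K₂), Λ_U = (f_l - q_s)/(C_l - 1), Λ_L = (q_s - f_r)/(1 - C_r), and suppose Λ_U = R * Λ_L and Λ_L ≠ 0. Define the linear shock trajectories ζ_U(τ) = Λ_U * τ and ζ_L(τ) = Λ_L * τ. Then for every τ > 0: (i) the harmonic-mean flux (ζ_U(τ) - ζ_L(τ)) / (ζ_U(τ)/K₁ - ζ_L(τ)/K₂) is well defined and equals q_s; and (ii) ζ_U and ζ_L solve the coupled system dζ_U/dτ = (f_l - Q(τ))/(C_l - 1) and dζ_L/dτ = (Q(τ) - f_r)/(1 - C_r), where Q(τ) = (ζ_U(τ) - ζ_L(τ))/(ζ_U(τ)/K₁ - ζ_L(τ)/K₂). In particular both shock speeds are constant in time before ponding. -/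
/-!
On the ray `ζ_U = R ζ_L` the common factor `ζ_L` cancels from the harmonic-mean flux, which
is therefore the constant `q_s`. The Rankine–Hugoniot right-hand sides are then the constants
`Λ_U` and `Λ_L`, the speeds of the linear trajectories.
-/

lemma div_sub_one_div_ne_zero {K₁ K₂ R : ℝ} (hK₁ : K₁ ≠ 0) (hK₂ : K₂ ≠ 0)
    (hRK : R * K₂ ≠ K₁) : R / K₁ - 1 / K₂ ≠ 0 := by
  rw [div_sub_div _ _ hK₁ hK₂, mul_one]
  exact div_ne_zero (sub_ne_zero.mpr hRK) (mul_ne_zero hK₁ hK₂)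

lemma mul_div_sub_div_eq_mul (R z K₁ K₂ : ℝ) :
    R * z / K₁ - z / K₂ = z * (R / K₁ - 1 / K₂) := by
  ring

lemma harmonicFlux_of_ratio {R z K₁ K₂ : ℝ} (hz : z ≠ 0) :
    (R * z - z) / (R * z / K₁ - z / K₂) = (R - 1) / (R / K₁ - 1 / K₂) := by
  rw [mul_div_sub_div_eq_mul, show R * z - z = z * (R - 1) by ring, mul_div_mul_left _ _ hz]

theorem linear_shocks_solve_saturated_system_general (K₁ K₂ Cl Cr fl fr R qs ΛU ΛL : ℝ)
    (hK₁ : 0 < K₁) (hK₂ : 0 < K₂)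
    (hRK : R * K₂ ≠ K₁)
    (hqs : qs = (R - 1) / (R / K₁ - 1 / K₂))
    (hΛU : ΛU = (fl - qs) / (Cl - 1))
    (hΛL : ΛL = (qs - fr) / (1 - Cr))
    (hratio : ΛU = R * ΛL) (hΛL0 : ΛL ≠ 0) :
    ∀ τ : ℝ, 0 < τ →
      ((ΛU * τ) / K₁ - (ΛL * τ) / K₂ ≠ 0 ∧
        (ΛU * τ - ΛL * τ) / ((ΛU * τ) / K₁ - (ΛL * τ) / K₂) = qs) ∧
      HasDerivAt (fun t : ℝ => ΛU * t)
        ((fl - (ΛU * τ - ΛL * τ) / ((ΛU * τ) / K₁ - (ΛL * τ) / K₂)) / (Cl - 1)) τ ∧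
      HasDerivAt (fun t : ℝ => ΛL * t)
        (((ΛU * τ - ΛL * τ) / ((ΛU * τ) / K₁ - (ΛL * τ) / K₂) - fr) / (1 - Cr)) τ := by
  intro τ hτ
  have hζL : ΛL * τ ≠ 0 := mul_ne_zero hΛL0 hτ.ne'
  have hζU : ΛU * τ = R * (ΛL * τ) := by rw [hratio, mul_assoc]
  have hQ : (ΛU * τ - ΛL * τ) / ((ΛU * τ) / K₁ - (ΛL * τ) / K₂) = qs := by
    rw [hζU, harmonicFlux_of_ratio hζL, hqs]
  refine ⟨⟨?_, hQ⟩, ?_, ?_⟩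
  · rw [hζU, mul_div_sub_div_eq_mul]
    exact mul_ne_zero hζL (div_sub_one_div_ne_zero hK₁.ne' hK₂.ne' hRK)
  · rw [hQ, ← hΛU]
    exact hasDerivAt_const_mul ΛU
  · rw [hQ, ← hΛL]
    exact hasDerivAt_const_mul ΛL

/-- With constant saturated-region flux `q_s = (R-1)/(R/K₁ - 1/K₂)` and constant shock
speeds `Λ_U = (f_l - q_s)/(C_l - 1)`, `Λ_L = (q_s - f_r)/(1 - C_r)` satisfying
`Λ_U = R * Λ_L`, the linear shock trajectories `ζ_U(τ) = Λ_U τ`, `ζ_L(τ) = Λ_L τ`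
(i) make the depth-weighted harmonic-mean flux well defined and equal to `q_s` for all
`τ > 0`, and (ii) solve the coupled Rankine–Hugoniot ODE system
`dζ_U/dτ = (f_l - Q(τ))/(C_l - 1)`, `dζ_L/dτ = (Q(τ) - f_r)/(1 - C_r)` with
`Q(τ) = (ζ_U - ζ_L)/(ζ_U/K₁ - ζ_L/K₂)`; in particular both shock speeds are constant
in time before ponding. -/
theorem linear_shocks_solve_saturated_system (K₁ K₂ Cl Cr fl fr R qs ΛU ΛL : ℝ)
    (hK₁ : 0 < K₁) (hK₂ : 0 < K₂) (hCl : Cl < 1) (hCr : Cr < 1)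
    (hRK : R * K₂ ≠ K₁)
    (hqs : qs = (R - 1) / (R / K₁ - 1 / K₂))
    (hΛU : ΛU = (fl - qs) / (Cl - 1))
    (hΛL : ΛL = (qs - fr) / (1 - Cr))
    (hratio : ΛU = R * ΛL) (hΛL0 : ΛL ≠ 0) :
    ∀ τ : ℝ, 0 < τ →
      ((ΛU * τ) / K₁ - (ΛL * τ) / K₂ ≠ 0 ∧
        (ΛU * τ - ΛL * τ) / ((ΛU * τ) / K₁ - (ΛL * τ) / K₂) = qs) ∧
      HasDerivAt (fun t : ℝ => ΛU * t)
        ((fl - (ΛU * τ - ΛL * τ) / ((ΛU * τ) / K₁ - (ΛL * τ) / K₂)) / (Cl - 1)) τ ∧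
      HasDerivAt (fun t : ℝ => ΛL * t)
        (((ΛU * τ - ΛL * τ) / ((ΛU * τ) / K₁ - (ΛL * τ) / K₂) - fr) / (1 - Cr)) τ :=
  linear_shocks_solve_saturated_system_general K₁ K₂ Cl Cr fl fr R qs ΛU ΛL hK₁ hK₂ hRK hqs hΛU hΛL
    hratio hΛL0
end
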